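/- arXiv:2402.07292 — 5 statements merged into one kernel-verified Lean document; each statement's English description precedes it below -/
import Mathlib

section
/- Let μ be a finite Borel measure on ℂ with compact support, let c ∈ ℂ and ρ > 0, and assume that the support of μ is disjoint from the circle {z ∈ ℂ : |z − c| = ρ}. Then (1/(2πi)) ∮_{|z−c|=ρ} ( ∫_ℂ (z − ζ)⁻¹ dμ(ζ) ) dz = μ({ζ ∈ ℂ : |ζ − c| < ρ}), where ∮_{|z−c|=ρ} denotes the integral over the positively oriented circle of radius ρ centered at c. -/
/-!
Parametrising the circle and using that the Cauchy kernel is bounded on the product of the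
circle with the compact support, Fubini lets us integrate over the circle first. For a point
`ζ` off the circle, `∮ (z - ζ)⁻¹ dz` is `2πi` inside the disk and `0` outside it (Cauchy's
theorem), so the result is `2πi` times the mass of the disk.
-/

open MeasureTheory Complex Filter

open Metric Set Real

theorem circleIntegral_sub_inv_of_notMem_sphere {c w : ℂ} {R : ℝ} (hR : 0 ≤ R)
    (hw : w ∉ sphere c R) :
    ∮ z in C(c, R), (z - w)⁻¹ = (ball c R).indicator (fun _ ↦ 2 * π * I) w := by
  by_cases hb : w ∈ ball c R
  · rw [indicator_of_mem hb, circleIntegral.integral_sub_inv_of_mem_ball hb]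
  have hcb : w ∉ closedBall c R := by
    rw [← ball_union_sphere]
    exact not_or_intro hb hw
  rw [indicator_of_notMem hb]
  refine DiffContOnCl.circleIntegral_eq_zero hR ?_
  exact ((differentiableOn_id.sub_const w).inv fun z hz ↦ sub_ne_zero.2 hz).diffContOnCl_ball
    fun z hz hzw ↦ hcb (hzw ▸ hz)

theorem circleIntegral_integral_swap {α E : Type*} [MeasurableSpace α] {μ : Measure α}
    [SFinite μ] [NormedAddCommGroup E] [NormedSpace ℂ E] [CompleteSpace E] {f : ℂ → α → E}
    {c : ℂ} {R : ℝ}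
    (hf : Integrable (fun p : ℝ × α ↦ f (circleMap c R p.1) p.2)
      ((volume.restrict (Ioc 0 (2 * π))).prod μ)) :
    ∮ z in C(c, R), ∫ a, f z a ∂μ = ∫ a, ∮ z in C(c, R), f z a ∂μ := by
  have hderiv : Integrable (Function.uncurry fun θ a ↦
      deriv (circleMap c R) θ • f (circleMap c R θ) a)
      ((volume.restrict (Ioc 0 (2 * π))).prod μ) := by
    refine hf.bdd_smul (φ := fun p ↦ deriv (circleMap c R) p.1) |R| ?_ (ae_of_all _ fun p ↦ ?_)
    · simp only [deriv_circleMap]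
      exact (((continuous_circleMap 0 R).mul continuous_const).measurable.comp
        measurable_fst).aestronglyMeasurable
    · simp [deriv_circleMap]
  simp only [circleIntegral, intervalIntegral.integral_of_le two_pi_pos.le]
  rw [← integral_integral_swap hderiv]
  simp only [integral_smul]

theorem integrable_circleMap_sub_inv {μ : Measure ℂ} [IsFiniteMeasure μ] {ν : Measure ℝ}
    [IsFiniteMeasure ν] {K : Set ℂ} (hK : IsCompact K) (hμK : μ Kᶜ = 0) {c : ℂ} {R : ℝ}
    (hR : 0 ≤ R) (hdisj : Disjoint K (sphere c R)) :
    Integrable (fun p : ℝ × ℂ ↦ (circleMap c R p.1 - p.2)⁻¹) (ν.prod μ) := by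
  have hcont : ContinuousOn (fun p : ℂ × ℂ ↦ (p.1 - p.2)⁻¹) (sphere c R ×ˢ K) :=
    (continuous_fst.sub continuous_snd).continuousOn.inv₀ fun p hp ↦
      sub_ne_zero.2 fun h ↦ hdisj.ne_of_mem hp.2 hp.1 h.symm
  obtain ⟨C, hC⟩ := ((isCompact_sphere c R).prod hK).exists_bound_of_continuousOn hcont
  have hmem : ∀ᵐ p ∂ν.prod μ, p.2 ∈ K :=
    Measure.quasiMeasurePreserving_snd.ae (ae_iff.2 hμK)
  refine Integrable.of_bound ?_ C (hmem.mono fun p hp ↦ hC (circleMap c R p.1, p.2)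
    ⟨circleMap_mem_sphere c hR p.1, hp⟩)
  exact (((continuous_circleMap c R).comp continuous_fst).sub
    continuous_snd).measurable.inv.aestronglyMeasurable

/-- The Cauchy transform of a compactly supported finite measure, integrated over a
positively oriented circle disjoint from the support, gives the measure of the open disk. -/
theorem circleIntegral_cauchyTransform (μ : Measure ℂ) [IsFiniteMeasure μ]
    (K : Set ℂ) (hK : IsCompact K) (hμK : μ Kᶜ = 0)
    (c : ℂ) (ρ : ℝ) (hρ : 0 < ρ)
    (hdisj : Disjoint K (Metric.sphere c ρ)) :
    (2 * Real.pi * I)⁻¹ * (∮ z in C(c, ρ), ∫ ζ, (z - ζ)⁻¹ ∂μ) =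
      ((μ (Metric.ball c ρ)).toReal : ℂ) := by
  have hinner : ∀ᵐ ζ ∂μ,
      ∮ z in C(c, ρ), (z - ζ)⁻¹ = (ball c ρ).indicator (fun _ ↦ 2 * π * I) ζ :=
    (ae_iff.2 hμK).mono fun ζ hζ ↦
      circleIntegral_sub_inv_of_notMem_sphere hρ.le (hdisj.notMem_of_mem_left hζ)
  rw [circleIntegral_integral_swap (integrable_circleMap_sub_inv hK hμK hρ.le hdisj),
    integral_congr_ae hinner, integral_indicator_const _ measurableSet_ball, real_smul,
    mul_comm, mul_inv_cancel_right₀ (by simp [pi_ne_zero, I_ne_zero]), measureReal_def]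
end

section
/- With E, H, S as in the context: the function S is holomorphic on ℂ ∖ E (in particular, it extends continuously and analytically across the real gaps between the intervals), S(z)² = H(z) for every z ∈ ℂ ∖ E, and S(z)/z^ℓ → 1 as |z| → ∞. -/
/-!
Pair the factors as `√(z - b_{2m-1}) √(z - b_{2m})`. Each pair is holomorphic off its own
interval: off the ray `(-∞, b_{2m}]` both factors are principal roots of points of the slit
plane, and left of `b_{2m-1}` the pair equals `-√(b_{2m-1} - z) √(b_{2m} - z)`, because crossing
the negative axis flips the sign of both factors at once. Squaring is immediate. At infinity,
`√(z - c) / √z` is a square root of `1 - c / z → 1` with positive real part, since `z - c` and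
`z` lie on the same side of the real axis; hence it is the principal one and tends to `1`.
-/

open Complex Filter Set Topology
open scoped Real

theorem Finset.prod_Icc_one_two_mul {M : Type*} [CommMonoid M] (f : ℕ → M) (n : ℕ) :
    ∏ j ∈ Icc 1 (2 * n), f j = ∏ m ∈ Icc 1 n, f (2 * m - 1) * f (2 * m) := by
  induction n with
  | zero => simp
  | succ n ih =>
    rw [show 2 * (n + 1) = 2 * n + 1 + 1 by ring, prod_Icc_succ_top (by omega),
      prod_Icc_succ_top (by omega), ih, prod_Icc_succ_top (by omega), mul_assoc]
    rfl

namespace Complex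

lemma sub_ofReal_mem_slitPlane_iff {c : ℝ} {z : ℂ} : z - c ∈ slitPlane ↔ c < z.re ∨ z.im ≠ 0 := by
  simp [mem_slitPlane_iff]

lemma ofReal_sub_mem_slitPlane_iff {c : ℝ} {z : ℂ} : c - z ∈ slitPlane ↔ z.re < c ∨ z.im ≠ 0 := by
  simp [mem_slitPlane_iff]

lemma neg_cpow_eq_cpow_mul_exp {x : ℂ} (hx : x ≠ 0) {θ : ℝ} (h : arg (-x) = arg x + θ) (y : ℂ) :
    (-x) ^ y = x ^ y * exp (θ * I * y) := by
  have hlog : log (-x) = log x + θ * I := by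
    apply Complex.ext <;> simp [log_re, log_im, h]
  rw [cpow_def_of_ne_zero (neg_ne_zero.2 hx), cpow_def_of_ne_zero hx, ← exp_add, hlog]
  ring_nf

lemma neg_cpow_inv_two_mul_neg_cpow_inv_two {x x' : ℂ} (hx : x ≠ 0) (hx' : x' ≠ 0) {θ : ℝ}
    (hθ : exp (θ * I) = -1) (h : arg (-x) = arg x + θ) (h' : arg (-x') = arg x' + θ) :
    (-x) ^ (2⁻¹ : ℂ) * (-x') ^ (2⁻¹ : ℂ) = -(x ^ (2⁻¹ : ℂ) * x' ^ (2⁻¹ : ℂ)) := by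
  rw [neg_cpow_eq_cpow_mul_exp hx h, neg_cpow_eq_cpow_mul_exp hx' h']
  have hhalf : exp (θ * I * 2⁻¹) * exp (θ * I * 2⁻¹) = -1 := by
    rw [← exp_add, ← hθ]; ring_nf
  linear_combination x ^ (2⁻¹ : ℂ) * x' ^ (2⁻¹ : ℂ) * hhalf

lemma cpow_inv_two_mul_cpow_inv_two_eq_neg {c d : ℝ} (hcd : c ≤ d) {z : ℂ}
    (hz : z.re < c ∨ z.im ≠ 0) :
    (z - c) ^ (2⁻¹ : ℂ) * (z - d) ^ (2⁻¹ : ℂ) = -((c - z) ^ (2⁻¹ : ℂ) * (d - z) ^ (2⁻¹ : ℂ)) := by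
  have hc : (c : ℂ) - z ≠ 0 := slitPlane_ne_zero (ofReal_sub_mem_slitPlane_iff.2 hz)
  have hd : (d : ℂ) - z ≠ 0 :=
    slitPlane_ne_zero (ofReal_sub_mem_slitPlane_iff.2 (hz.imp_left (·.trans_le hcd)))
  rw [← neg_sub (c : ℂ), ← neg_sub (d : ℂ)]
  rcases lt_or_ge z.im 0 with him | him
  · refine neg_cpow_inv_two_mul_neg_cpow_inv_two hc hd (θ := -π) (by simp) ?_ ?_ <;>
      · rw [← sub_eq_add_neg, arg_neg_eq_arg_sub_pi_iff]; left; simpa using him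
  · have hpos : ∀ e : ℝ, c ≤ e → arg (-((e : ℂ) - z)) = arg ((e : ℂ) - z) + π := fun e hce => by
      rw [arg_neg_eq_arg_add_pi_iff]
      rcases hz with hre | hne
      · rcases him.lt_or_eq with him | him
        · left; simpa using him
        · right; simp only [sub_re, ofReal_re, sub_im, ofReal_im]; constructor <;> linarith
      · left; simpa using lt_of_le_of_ne him hne.symm
    exact neg_cpow_inv_two_mul_neg_cpow_inv_two hc hd exp_pi_mul_I (hpos c le_rfl) (hpos d hcd)

lemma differentiableOn_cpow_inv_two_mul_cpow_inv_two {c d : ℝ} (hcd : c ≤ d) :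
    DifferentiableOn ℂ (fun z : ℂ => (z - c) ^ (2⁻¹ : ℂ) * (z - d) ^ (2⁻¹ : ℂ))
      (ofReal '' Icc c d)ᶜ := by
  intro z₀ hz₀
  refine DifferentiableAt.differentiableWithinAt ?_
  by_cases hright : d < z₀.re ∨ z₀.im ≠ 0
  · have hc : z₀ - c ∈ slitPlane :=
      sub_ofReal_mem_slitPlane_iff.2 (hright.imp_left (hcd.trans_lt ·))
    exact ((differentiableAt_id.sub_const _).cpow_const hc).mul
      ((differentiableAt_id.sub_const _).cpow_const (sub_ofReal_mem_slitPlane_iff.2 hright))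
  · push Not at hright
    have hleft : z₀.re < c := by
      by_contra! hle
      exact hz₀ ⟨z₀.re, ⟨hle, hright.1⟩, Complex.ext rfl (by simp [hright.2])⟩
    have hnhds : ∀ᶠ z in 𝓝 z₀, z.re < c :=
      continuous_re.continuousAt.eventually_lt continuousAt_const hleft
    rw [Filter.EventuallyEq.differentiableAt_iff (hnhds.mono fun z hz =>
      cpow_inv_two_mul_cpow_inv_two_eq_neg hcd (Or.inl hz))]
    exact (((differentiableAt_const _).sub differentiableAt_id).cpow_const
      (ofReal_sub_mem_slitPlane_iff.2 (Or.inl hleft))).mul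
      (((differentiableAt_const _).sub differentiableAt_id).cpow_const
      (ofReal_sub_mem_slitPlane_iff.2 (Or.inl (hleft.trans_le hcd)))) |>.neg

lemma abs_arg_sub_ofReal_sub_arg_lt_pi {c : ℝ} {z : ℂ} (hz : |c| < ‖z‖) :
    |arg (z - c) - arg z| < π := by
  have him : (z - c).im = z.im := by simp
  rcases lt_trichotomy z.im 0 with hneg | hzero | hpos
  · rw [abs_lt]
    constructor <;> linarith [neg_pi_lt_arg z, neg_pi_lt_arg (z - c), arg_neg_iff.2 hneg,
      arg_neg_iff.2 (him ▸ hneg)]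
  · have hcz : |c| < |z.re| := abs_re_eq_norm.2 hzero ▸ hz
    have harg : arg (z - c) = arg z := by
      rcases lt_or_ge z.re 0 with hre | hre
      · rw [abs_of_neg hre] at hcz
        rw [arg_eq_pi_iff.2 ⟨hre, hzero⟩, arg_eq_pi_iff.2 ⟨?_, him ▸ hzero⟩]
        simp only [sub_re, ofReal_re]; linarith [neg_abs_le c]
      · rw [abs_of_nonneg hre] at hcz
        rw [arg_eq_zero_iff.2 ⟨hre, hzero⟩, arg_eq_zero_iff.2 ⟨?_, him ▸ hzero⟩]
        simp only [sub_re, ofReal_re]; linarith [le_abs_self c]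
    simp [harg, Real.pi_pos]
  · rw [abs_lt]
    constructor <;> linarith [arg_lt_pi_iff.2 (Or.inr hpos.ne'),
      arg_lt_pi_iff.2 (Or.inr (him ▸ hpos.ne')), arg_nonneg_iff.2 hpos.le,
      arg_nonneg_iff.2 (him ▸ hpos.le)]

lemma re_cpow_inv_two_div_cpow_inv_two_pos {w z : ℂ} (hw : w ≠ 0) (hz : z ≠ 0)
    (h : |arg w - arg z| < π) : 0 < (w ^ (2⁻¹ : ℂ) / z ^ (2⁻¹ : ℂ)).re := by
  rw [cpow_def_of_ne_zero hw, cpow_def_of_ne_zero hz, ← exp_sub, ← sub_mul, exp_re]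
  refine mul_pos (Real.exp_pos _) (Real.cos_pos_of_mem_Ioo ?_)
  have him : ((log w - log z) * 2⁻¹).im = (arg w - arg z) / 2 := by
    simp [log_im, div_eq_mul_inv]
  rw [him, mem_Ioo]
  constructor <;> linarith [abs_lt.1 h]

lemma tendsto_cpow_inv_two_sub_div_cpow_inv_two (c : ℝ) :
    Tendsto (fun z : ℂ => (z - c) ^ (2⁻¹ : ℂ) / z ^ (2⁻¹ : ℂ)) (cocompact ℂ) (𝓝 1) := by
  have hfar : ∀ᶠ z : ℂ in cocompact ℂ, |c| < ‖z‖ :=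
    tendsto_norm_cocompact_atTop.eventually_gt_atTop _
  have hne : ∀ᶠ z : ℂ in cocompact ℂ, z ≠ 0 ∧ z - c ≠ 0 := hfar.mono fun z hz =>
    ⟨norm_pos_iff.1 ((abs_nonneg c).trans_lt hz), fun h => by
      rw [sub_eq_zero.1 h, norm_real, Real.norm_eq_abs] at hz; exact hz.false⟩
  have hinv : Tendsto (fun z : ℂ => 1 - c * z⁻¹) (cocompact ℂ) (𝓝 1) := by
    rw [← Metric.cobounded_eq_cocompact]
    simpa using (tendsto_inv₀_cobounded.const_mul (c : ℂ)).const_sub (1 : ℂ)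
  have hsq : Tendsto (fun z : ℂ => ((z - c) ^ (2⁻¹ : ℂ) / z ^ (2⁻¹ : ℂ)) ^ 2) (cocompact ℂ)
      (𝓝 1) := hinv.congr' <| hne.mono fun z ⟨hz, _⟩ => by
    dsimp only
    rw [div_pow, cpow_ofNat_inv_pow, cpow_ofNat_inv_pow]
    field_simp
  have hroot := ((continuousAt_cpow_const (b := 2⁻¹) one_mem_slitPlane).tendsto.comp hsq)
  rw [one_cpow] at hroot
  refine hroot.congr' ((hfar.and hne).mono fun z ⟨hz, hz0, hzc⟩ => ?_)
  exact sq_cpow_two_inv (re_cpow_inv_two_div_cpow_inv_two_pos hzc hz0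
    (abs_arg_sub_ofReal_sub_arg_lt_pi hz))

end Complex

theorem sqrtH_branch_general (ℓ : ℕ) (b : ℕ → ℝ)
    (hb : ∀ i, 1 ≤ i → i < 2 * ℓ → b i < b (i + 1))
    (E : Set ℂ)
    (hE : E = ⋃ j ∈ Finset.Icc 1 ℓ, Complex.ofReal '' Set.Icc (b (2 * j - 1)) (b (2 * j)))
    (H S : ℂ → ℂ)
    (hH : ∀ z, H z = ∏ j ∈ Finset.Icc 1 (2 * ℓ), (z - (b j : ℂ)))
    (hS : ∀ z, S z = ∏ j ∈ Finset.Icc 1 (2 * ℓ), (z - (b j : ℂ)) ^ ((1 : ℂ) / 2)) :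
    DifferentiableOn ℂ S Eᶜ ∧ (∀ z ∈ Eᶜ, S z ^ 2 = H z) ∧
      Tendsto (fun z => S z / z ^ ℓ) (cocompact ℂ) (nhds 1) := by
  simp only [one_div] at hS
  refine ⟨?_, fun z _ => ?_, ?_⟩
  · have hS_pairs : S = fun z => ∏ m ∈ Finset.Icc 1 ℓ,
        (z - (b (2 * m - 1) : ℂ)) ^ (2⁻¹ : ℂ) * (z - (b (2 * m) : ℂ)) ^ (2⁻¹ : ℂ) := by
      funext z; rw [hS, Finset.prod_Icc_one_two_mul]
    rw [hS_pairs]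
    refine DifferentiableOn.fun_finsetProd fun m hm => ?_
    obtain ⟨hm1, hmℓ⟩ := Finset.mem_Icc.1 hm
    have hlt := hb (2 * m - 1) (by omega) (by omega)
    rw [show 2 * m - 1 + 1 = 2 * m by omega] at hlt
    refine (differentiableOn_cpow_inv_two_mul_cpow_inv_two hlt.le).mono (compl_subset_compl.2 ?_)
    rw [hE]
    exact subset_biUnion_of_mem (u := fun j => ofReal '' Icc (b (2 * j - 1)) (b (2 * j))) hm
  · simp [hS, hH, ← Finset.prod_pow]
  · have hfactors := tendsto_finsetProd (Finset.Icc 1 (2 * ℓ))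
      fun j _ => tendsto_cpow_inv_two_sub_div_cpow_inv_two (b j)
    rw [Finset.prod_const_one] at hfactors
    refine hfactors.congr fun z => ?_
    simp only [Finset.prod_div_distrib, Finset.prod_const, Nat.card_Icc, add_tsub_cancel_right,
      pow_mul, cpow_ofNat_inv_pow, hS]

/-- The branch `S` of `√H` given by the product of principal square roots is holomorphic
on the complement of `E`, squares to `H` there, and behaves like `z^ℓ` at infinity. -/
theorem sqrtH_branch (ℓ : ℕ) (hℓ : 1 ≤ ℓ) (b : ℕ → ℝ)
    (hb : ∀ i, 1 ≤ i → i < 2 * ℓ → b i < b (i + 1))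
    (E : Set ℂ)
    (hE : E = ⋃ j ∈ Finset.Icc 1 ℓ, Complex.ofReal '' Set.Icc (b (2 * j - 1)) (b (2 * j)))
    (H S : ℂ → ℂ)
    (hH : ∀ z, H z = ∏ j ∈ Finset.Icc 1 (2 * ℓ), (z - (b j : ℂ)))
    (hS : ∀ z, S z = ∏ j ∈ Finset.Icc 1 (2 * ℓ), (z - (b j : ℂ)) ^ ((1 : ℂ) / 2)) :
    DifferentiableOn ℂ S Eᶜ ∧ (∀ z ∈ Eᶜ, S z ^ 2 = H z) ∧
      Tendsto (fun z => S z / z ^ ℓ) (cocompact ℂ) (nhds 1) :=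
  sqrtH_branch_general ℓ b hb E hE H S hH hS
end

section
/- With E and H as in the context: there exists a unique monic polynomial R of degree ℓ−1 with real coefficients such that for every j = 1, …, ℓ−1 the function x ↦ R(x)/√(H(x)) is Lebesgue integrable on the open gap (b_{2j}, b_{2j+1}) and ∫_{b_{2j}}^{b_{2j+1}} R(x)/√(H(x)) dx = 0, where √(H(x)) denotes the positive real square root (note H(x) > 0 on each gap). -/
/-!
On the gap `(b (2j), b (2j+1))` the product `H` factors as `(x - b (2j)) (b (2j+1) - x) G x` with
`G` continuous and positive on the closed gap, so `P / √H` is dominated by a multiple of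
`(x - b (2j))^(-1/2) + (b (2j+1) - x)^(-1/2)` and the `ℓ - 1` gap integrals are linear functionals
on `ℝ[X]`. If all of them vanish on `P`, then `P` changes sign in every gap, so `P = 0` or
`deg P ≥ ℓ - 1`. Hence the functionals are injective, thus bijective, on polynomials of degree
`< ℓ - 1`, and `R = X^(ℓ-1) + P` with `P` the preimage of minus the gap integrals of `X^(ℓ-1)`.
-/

open MeasureTheory Set Polynomial

theorem IsPreconnected.forall_pos_of_ne_zero {X : Type*} [TopologicalSpace X] {s : Set X}
    {f : X → ℝ} (hs : IsPreconnected s) (hf : ContinuousOn f s) (hne : ∀ x ∈ s, f x ≠ 0)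
    {a : X} (ha : a ∈ s) (hfa : 0 < f a) : ∀ x ∈ s, 0 < f x := by
  intro x hx
  by_contra! hfx
  obtain ⟨y, hy, hy0⟩ := hs.intermediate_value hx ha hf ⟨hfx, hfa.le⟩
  exact hne y hy hy0

theorem exists_mem_Ioo_eq_zero_of_intervalIntegral_div_eq_zero {f g : ℝ → ℝ} {α β : ℝ}
    (hαβ : α < β) (hf : ContinuousOn f (Ioo α β)) (hg : ∀ x ∈ Ioo α β, 0 < g x)
    (hint : IntervalIntegrable (fun x => f x / g x) volume α β)
    (hzero : ∫ x in α..β, f x / g x = 0) : ∃ x ∈ Ioo α β, f x = 0 := by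
  by_contra! hne
  have hmid : (α + β) / 2 ∈ Ioo α β := ⟨by linarith, by linarith⟩
  rcases (hne _ hmid).lt_or_gt with hneg | hpos
  · have hfneg := isPreconnected_Ioo.forall_pos_of_ne_zero hf.neg
      (fun x hx => neg_ne_zero.2 (hne x hx)) hmid (neg_pos.2 hneg)
    have := intervalIntegral.intervalIntegral_pos_of_pos_on hint.neg
      (fun x hx => by simpa [neg_div] using div_pos (hfneg x hx) (hg x hx)) hαβ
    simp [intervalIntegral.integral_neg, hzero] at this
  · have hfpos := isPreconnected_Ioo.forall_pos_of_ne_zero hf hne hmid hpos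
    have := intervalIntegral.intervalIntegral_pos_of_pos_on hint
      (fun x hx => div_pos (hfpos x hx) (hg x hx)) hαβ
    simp [hzero] at this

theorem Real.inv_sqrt_mul_le {u v : ℝ} (hu : 0 < u) (hv : 0 < v) :
    (√(u * v))⁻¹ ≤ (√(u + v))⁻¹ * ((√u)⁻¹ + (√v)⁻¹) := by
  have hsu := Real.sqrt_pos.2 hu
  have hsv := Real.sqrt_pos.2 hv
  have hsum : √(u + v) ≤ √u + √v := by
    rw [Real.sqrt_le_left (by positivity)]
    nlinarith [Real.sq_sqrt hu.le, Real.sq_sqrt hv.le]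
  have hsL : 0 < √(u + v) := Real.sqrt_pos.2 (by positivity)
  calc (√(u * v))⁻¹ = (√(u + v))⁻¹ * (√(u + v) / (√u * √v)) := by
        rw [Real.sqrt_mul hu.le]; field_simp
    _ ≤ (√(u + v))⁻¹ * ((√u + √v) / (√u * √v)) := by gcongr
    _ = (√(u + v))⁻¹ * ((√u)⁻¹ + (√v)⁻¹) := by rw [inv_add_inv hsu.ne' hsv.ne', add_comm]

theorem integrableOn_inv_sqrt_mul_sub {α β : ℝ} (hαβ : α < β) :
    IntegrableOn (fun x => (√((x - α) * (β - x)))⁻¹) (Ioo α β) := by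
  have hleft : IntervalIntegrable (fun x => (x - α) ^ (-(1 / 2) : ℝ)) volume α β := by
    simpa using (intervalIntegral.intervalIntegrable_rpow' (r := -(1 / 2)) (by norm_num)
      (a := 0) (b := β - α)).comp_sub_right α
  have hright : IntervalIntegrable (fun x => (β - x) ^ (-(1 / 2) : ℝ)) volume α β := by
    simpa using ((intervalIntegral.intervalIntegrable_rpow' (r := -(1 / 2)) (by norm_num)
      (a := 0) (b := β - α)).comp_sub_left β).symm
  have hbound : IntegrableOn (fun x => (√(β - α))⁻¹ *
      ((x - α) ^ (-(1 / 2) : ℝ) + (β - x) ^ (-(1 / 2) : ℝ))) (Ioo α β) :=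
    ((intervalIntegrable_iff_integrableOn_Ioo_of_le hαβ.le).1 (hleft.add hright)).const_mul _
  refine hbound.mono' (by fun_prop) ((ae_restrict_iff' measurableSet_Ioo).2 ?_)
  filter_upwards with x ⟨hαx, hxβ⟩
  have hu : 0 < x - α := by linarith
  have hv : 0 < β - x := by linarith
  rw [Real.norm_of_nonneg (by positivity), Real.rpow_neg hu.le, Real.rpow_neg hv.le,
    ← Real.sqrt_eq_rpow, ← Real.sqrt_eq_rpow]
  simpa using Real.inv_sqrt_mul_le hu hv

theorem integrableOn_div_sqrt_mul_sub_mul {α β : ℝ} (hαβ : α < β) {f G : ℝ → ℝ}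
    (hf : ContinuousOn f (Icc α β)) (hG : ContinuousOn G (Icc α β))
    (hGpos : ∀ x ∈ Icc α β, 0 < G x) :
    IntegrableOn (fun x => f x / √((x - α) * (β - x) * G x)) (Ioo α β) := by
  have hcont : ContinuousOn (fun x => f x / √(G x)) (Icc α β) :=
    hf.div hG.sqrt fun x hx => (Real.sqrt_pos.2 (hGpos x hx)).ne'
  have hprod := (((integrableOn_inv_sqrt_mul_sub hαβ).congr_set_ae Ioo_ae_eq_Icc.symm
    ).mul_continuousOn hcont isCompact_Icc).mono_set Ioo_subset_Icc_self
  refine hprod.congr_fun (fun x ⟨hαx, hxβ⟩ => ?_) measurableSet_Ioo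
  have : 0 ≤ (x - α) * (β - x) := mul_nonneg (by linarith) (by linarith)
  simp only [Real.sqrt_mul this]
  field_simp

theorem isLinearMap_intervalIntegral_eval_div {w : ℝ → ℝ} {α β : ℝ}
    (hw : ∀ P : ℝ[X], IntervalIntegrable (fun x => P.eval x / w x) volume α β) :
    IsLinearMap ℝ fun P : ℝ[X] => ∫ x in α..β, P.eval x / w x where
  map_add P Q := by
    simp only [eval_add, add_div]
    exact intervalIntegral.integral_add (hw P) (hw Q)
  map_smul c P := by
    simp only [eval_smul, smul_eq_mul, mul_div_assoc]
    exact intervalIntegral.integral_const_mul c _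

theorem Polynomial.existsUnique_monic_natDegree_eq_of_injOn_degreeLT {K ι : Type*} [Field K]
    [Fintype ι] (I : ι → K[X] → K) (hI : ∀ j, IsLinearMap K (I j))
    (hinj : ∀ P ∈ degreeLT K (Fintype.card ι), (∀ j, I j P = 0) → P = 0) :
    ∃! R : K[X], R.Monic ∧ R.natDegree = Fintype.card ι ∧ ∀ j, I j R = 0 := by
  set n := Fintype.card ι
  let L : K[X] →ₗ[K] ι → K := LinearMap.pi fun j => (hI j).mk' (I j)
  have hL : ∀ P, L P = 0 ↔ ∀ j, I j P = 0 := fun P => funext_iff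
  have hmonic_sub : ∀ R : K[X], R.Monic → R.natDegree = n → R - X ^ n ∈ degreeLT K n := by
    intro R hR hRdeg
    have := degree_sub_lt_left (q := X ^ n)
      (by rw [degree_eq_natDegree hR.ne_zero, hRdeg, degree_X_pow]) hR.ne_zero
      (by rw [hR.leadingCoeff, leadingCoeff_X_pow])
    rw [degree_eq_natDegree hR.ne_zero, hRdeg] at this
    exact mem_degreeLT.2 this
  let ψ : (Fin n → K) →ₗ[K] ι → K :=
    L ∘ₗ (degreeLT K n).subtype ∘ₗ (degreeLTEquiv K n).symm.toLinearMap
  have hψ : Function.Injective ψ := by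
    rw [← LinearMap.ker_eq_bot, LinearMap.ker_eq_bot']
    intro v hv
    have h0 := hinj _ ((degreeLTEquiv K n).symm v).2 ((hL _).1 hv)
    simpa using congrArg (degreeLTEquiv K n) (Subtype.ext h0 : (degreeLTEquiv K n).symm v = 0)
  obtain ⟨v, hv⟩ := (LinearMap.injective_iff_surjective_of_finrank_eq_finrank
    (by simp [n])).1 hψ (-L (X ^ n))
  set P : K[X] := ((degreeLTEquiv K n).symm v : K[X])
  have hPdeg : P.degree < n := mem_degreeLT.1 ((degreeLTEquiv K n).symm v).2
  have hLP : L P = -L (X ^ n) := hv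
  refine ⟨X ^ n + P, ⟨monic_X_pow_add hPdeg, ?_, (hL _).1 ?_⟩, ?_⟩
  · rw [natDegree_add_eq_left_of_degree_lt (by rwa [degree_X_pow]), natDegree_X_pow]
  · rw [map_add, hLP, add_neg_cancel]
  · rintro R ⟨hRmonic, hRdeg, hR⟩
    have hmem : R - (X ^ n + P) ∈ degreeLT K n := by
      rw [← sub_sub]
      exact sub_mem (hmonic_sub R hRmonic hRdeg) ((degreeLTEquiv K n).symm v).2
    refine sub_eq_zero.1 (hinj _ hmem ((hL _).1 ?_))
    rw [map_sub, map_add, hLP, (hL R).2 hR]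
    abel

theorem Finset.prod_Icc_sub_eq_of_even {R : Type*} [CommRing R] (b : ℕ → R) {k n : ℕ}
    (hkn : k ≤ n) (heven : Even (n - k)) (x : R) :
    ∏ i ∈ Finset.Icc 1 n, (x - b i) =
      (∏ i ∈ Finset.Icc 1 k, (x - b i)) * ∏ i ∈ Finset.Ioc k n, (b i - x) := by
  have hIoc : ∀ m, Finset.Icc 1 m = Finset.Ioc 0 m := Finset.Icc_add_one_left_eq_Ioc 0
  have hneg : ∏ i ∈ Finset.Ioc k n, (x - b i) = ∏ i ∈ Finset.Ioc k n, (b i - x) := by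
    rw [← Finset.prod_congr rfl fun i _ => neg_sub (b i) x, Finset.prod_neg, Nat.card_Ioc,
      heven.neg_one_pow, one_mul]
  rw [hIoc, hIoc, ← Finset.prod_Ioc_consecutive _ k.zero_le hkn, hneg]

theorem exists_gap_factorization {ℓ : ℕ} {b : ℕ → ℝ} (hb : StrictMonoOn b (Icc 1 (2 * ℓ)))
    {j : ℕ} (hj : 1 ≤ j) (hjℓ : j < ℓ) :
    ∃ G : ℝ → ℝ, Continuous G ∧ (∀ x ∈ Icc (b (2 * j)) (b (2 * j + 1)), 0 < G x) ∧
      ∀ x, ∏ i ∈ Finset.Icc 1 (2 * ℓ), (x - b i) = (x - b (2 * j)) * (b (2 * j + 1) - x) * G x := by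
  refine ⟨fun x => (∏ i ∈ Finset.Ico 1 (2 * j), (x - b i)) *
    ∏ i ∈ Finset.Ioc (2 * j + 1) (2 * ℓ), (b i - x), by fun_prop, ?_, fun x => ?_⟩
  · rintro x ⟨hx₁, hx₂⟩
    refine mul_pos (Finset.prod_pos fun i hi => ?_) (Finset.prod_pos fun i hi => ?_)
    · rw [Finset.mem_Ico] at hi
      have := hb ⟨hi.1, by omega⟩ ⟨by omega, by omega⟩ hi.2
      linarith
    · rw [Finset.mem_Ioc] at hi
      have := hb ⟨by omega, by omega⟩ ⟨by omega, hi.2⟩ hi.1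
      linarith
  · rw [Finset.prod_Icc_sub_eq_of_even b (k := 2 * j) (by omega) ⟨ℓ - j, by omega⟩,
      ← Finset.Ico_add_one_right_eq_Icc, Finset.prod_Ico_succ_top (by omega),
      ← Finset.insert_Ioc_add_one_left_eq_Ioc (by omega), Finset.prod_insert (by simp)]
    ring

theorem prod_sub_pos_of_mem_gap {ℓ : ℕ} {b : ℕ → ℝ} (hb : StrictMonoOn b (Icc 1 (2 * ℓ)))
    {j : ℕ} (hj : 1 ≤ j) (hjℓ : j < ℓ) {x : ℝ} (hx : x ∈ Ioo (b (2 * j)) (b (2 * j + 1))) :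
    0 < ∏ i ∈ Finset.Icc 1 (2 * ℓ), (x - b i) := by
  obtain ⟨G, -, hGpos, hH⟩ := exists_gap_factorization hb hj hjℓ
  rw [hH]
  exact mul_pos (mul_pos (by linarith [hx.1]) (by linarith [hx.2]))
    (hGpos x (Ioo_subset_Icc_self hx))

theorem integrableOn_eval_div_sqrt_prod_sub {ℓ : ℕ} {b : ℕ → ℝ}
    (hb : StrictMonoOn b (Icc 1 (2 * ℓ))) {j : ℕ} (hj : 1 ≤ j) (hjℓ : j < ℓ) (P : ℝ[X]) :
    IntegrableOn (fun x => P.eval x / √(∏ i ∈ Finset.Icc 1 (2 * ℓ), (x - b i)))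
      (Ioo (b (2 * j)) (b (2 * j + 1))) := by
  obtain ⟨G, hGcont, hGpos, hH⟩ := exists_gap_factorization hb hj hjℓ
  simp_rw [hH]
  exact integrableOn_div_sqrt_mul_sub_mul
    (hb ⟨by omega, by omega⟩ ⟨by omega, by omega⟩ (by omega))
    P.continuous.continuousOn hGcont.continuousOn hGpos

theorem intervalIntegrable_eval_div_sqrt_prod_sub {ℓ : ℕ} {b : ℕ → ℝ}
    (hb : StrictMonoOn b (Icc 1 (2 * ℓ))) {j : ℕ} (hj : 1 ≤ j) (hjℓ : j < ℓ) (P : ℝ[X]) :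
    IntervalIntegrable (fun x => P.eval x / √(∏ i ∈ Finset.Icc 1 (2 * ℓ), (x - b i))) volume
      (b (2 * j)) (b (2 * j + 1)) :=
  (intervalIntegrable_iff_integrableOn_Ioo_of_le
    (hb ⟨by omega, by omega⟩ ⟨by omega, by omega⟩ (by omega)).le).2
    (integrableOn_eval_div_sqrt_prod_sub hb hj hjℓ P)

theorem eq_zero_of_forall_gap_integral_eq_zero {ℓ : ℕ} {b : ℕ → ℝ}
    (hb : StrictMonoOn b (Icc 1 (2 * ℓ))) {P : ℝ[X]} (hP : P.degree < ↑(ℓ - 1))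
    (hint : ∀ j ∈ Finset.Icc 1 (ℓ - 1),
      ∫ x in b (2 * j)..b (2 * j + 1), P.eval x / √(∏ i ∈ Finset.Icc 1 (2 * ℓ), (x - b i)) = 0) :
    P = 0 := by
  rcases eq_or_ne P 0 with rfl | hP0
  · rfl
  have hroot : ∀ j : Finset.Icc 1 (ℓ - 1),
      ∃ x ∈ Ioo (b (2 * j)) (b (2 * j + 1)), P.eval x = 0 := by
    rintro ⟨j, hj⟩
    have hj' := Finset.mem_Icc.1 hj
    dsimp only
    exact exists_mem_Ioo_eq_zero_of_intervalIntegral_div_eq_zero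
      (hb ⟨by omega, by omega⟩ ⟨by omega, by omega⟩ (by omega)) P.continuous.continuousOn
      (fun x hx => Real.sqrt_pos.2 (prod_sub_pos_of_mem_gap hb hj'.1 (by omega) hx))
      (intervalIntegrable_eval_div_sqrt_prod_sub hb hj'.1 (by omega) P) (hint j hj)
  choose r hr hr0 using hroot
  have hr_mono : StrictMono r := by
    rintro ⟨j, hj⟩ ⟨k, hk⟩ (hjk : j < k)
    have hj' := Finset.mem_Icc.1 hj
    have hk' := Finset.mem_Icc.1 hk
    calc r ⟨j, hj⟩ < b (2 * j + 1) := (hr _).2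
      _ ≤ b (2 * k) := hb.monotoneOn ⟨by omega, by omega⟩ ⟨by omega, by omega⟩ (by omega)
      _ < r ⟨k, hk⟩ := (hr ⟨k, hk⟩).1
  exact eq_zero_of_natDegree_lt_card_of_eval_eq_zero P hr_mono.injective hr0
    (by simpa using (natDegree_lt_iff_degree_lt hP0).2 hP)

theorem exists_unique_R_general (ℓ : ℕ) (b : ℕ → ℝ)
    (hb : ∀ i, 1 ≤ i → i < 2 * ℓ → b i < b (i + 1)) :
    ∃! R : Polynomial ℝ, R.Monic ∧ R.natDegree = ℓ - 1 ∧
      ∀ j, 1 ≤ j → j ≤ ℓ - 1 →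
        IntegrableOn
          (fun x => R.eval x / Real.sqrt (∏ i ∈ Finset.Icc 1 (2 * ℓ), (x - b i)))
          (Set.Ioo (b (2 * j)) (b (2 * j + 1))) ∧
        ∫ x in (b (2 * j))..(b (2 * j + 1)),
          R.eval x / Real.sqrt (∏ i ∈ Finset.Icc 1 (2 * ℓ), (x - b i)) = 0 := by
  have hmono : StrictMonoOn b (Icc 1 (2 * ℓ)) :=
    strictMonoOn_of_lt_add_one ordConnected_Icc fun i _ hi hi' => hb i hi.1 hi'.2
  have hint : ∀ j ∈ Finset.Icc 1 (ℓ - 1), ∀ P : ℝ[X], IntervalIntegrable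
      (fun x => P.eval x / √(∏ i ∈ Finset.Icc 1 (2 * ℓ), (x - b i))) volume
      (b (2 * j)) (b (2 * j + 1)) := fun j hj P => by
    rw [Finset.mem_Icc] at hj
    exact intervalIntegrable_eval_div_sqrt_prod_sub hmono hj.1 (by omega) P
  obtain ⟨R, ⟨hRmonic, hRdeg, hR⟩, huniq⟩ :=
    Polynomial.existsUnique_monic_natDegree_eq_of_injOn_degreeLT (ι := Finset.Icc 1 (ℓ - 1))
      (fun j P => ∫ x in b (2 * j)..b (2 * j + 1),
        P.eval x / √(∏ i ∈ Finset.Icc 1 (2 * ℓ), (x - b i)))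
      (fun j => isLinearMap_intervalIntegral_eval_div (hint j j.2))
      (fun P hP h => eq_zero_of_forall_gap_integral_eq_zero hmono
        (by simpa [mem_degreeLT] using hP) fun j hj => h ⟨j, hj⟩)
  refine ⟨R, ⟨hRmonic, by simpa using hRdeg, fun j hj hjℓ => ⟨?_, hR ⟨j, by simp [hj, hjℓ]⟩⟩⟩,
    fun R' ⟨hR'monic, hR'deg, hR'⟩ => huniq R' ⟨hR'monic, by simpa using hR'deg,
      fun j => (hR' j (Finset.mem_Icc.1 j.2).1 (Finset.mem_Icc.1 j.2).2).2⟩⟩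
  exact integrableOn_eval_div_sqrt_prod_sub hmono hj (by omega) R

/-- Existence and uniqueness of the monic real polynomial `R` of degree `ℓ - 1` whose
integrals against `1/√H` over all the gaps of `E` vanish. -/
theorem exists_unique_R (ℓ : ℕ) (hℓ : 1 ≤ ℓ) (b : ℕ → ℝ)
    (hb : ∀ i, 1 ≤ i → i < 2 * ℓ → b i < b (i + 1)) :
    ∃! R : Polynomial ℝ, R.Monic ∧ R.natDegree = ℓ - 1 ∧
      ∀ j, 1 ≤ j → j ≤ ℓ - 1 →
        IntegrableOn
          (fun x => R.eval x / Real.sqrt (∏ i ∈ Finset.Icc 1 (2 * ℓ), (x - b i)))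
          (Set.Ioo (b (2 * j)) (b (2 * j + 1))) ∧
        ∫ x in (b (2 * j))..(b (2 * j + 1)),
          R.eval x / Real.sqrt (∏ i ∈ Finset.Icc 1 (2 * ℓ), (x - b i)) = 0 :=
  exists_unique_R_general ℓ b hb
end

section
/- With E, H, R as in the context: the polynomial R has ℓ−1 simple real zeros z₁ < z₂ < … < z_{ℓ−1} satisfying b_{2j} < z_j < b_{2j+1} for j = 1, …, ℓ−1 (one zero in each gap of E). Consequently, R has constant sign on each interval of E, namely R(x) = (−1)^{ℓ−j} |R(x)| for every x ∈ [b_{2j−1}, b_{2j}] and every j = 1, …, ℓ. -/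
open MeasureTheory Set Polynomial

/-!
If `R` had no zero in the gap `(b_{2j}, b_{2j+1})`, it would have constant sign there, and so would
`R / √H` because `H > 0` on the gap; its integral over the gap would then be nonzero. This integral
is a genuine Lebesgue integral: `H` has simple zeros at the ends of the gap, so
`|R / √H| ≤ C / √((x - b_{2j}) (b_{2j+1} - x))`, which is integrable. The `ℓ - 1` zeros so found
are distinct and exhaust the degree of the monic `R`, hence `R = ∏ (X - z_j)`, and on the `j`-th
interval of `E` exactly `ℓ - j` of the factors `x - z_i` are negative.
-/

lemma intervalIntegrable_inv_sqrt_mul_sub (a d : ℝ) :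
    IntervalIntegrable (fun x => (√((x - a) * (d - x)))⁻¹) volume a d := by
  wlog had : a ≤ d generalizing a d
  · refine (this d a (le_of_not_ge had)).symm.congr fun x _ => ?_
    ring_nf
  set m := (a + d) / 2 with hm
  have h_left : IntervalIntegrable (fun x => (√((x - a) * (d - x)))⁻¹) volume a m := by
    have hmaj := ((intervalIntegral.intervalIntegrable_rpow' (a := 0) (b := m - a)
      (r := -(1 / 2)) (by norm_num)).comp_sub_right a).const_mul (((d - a) / 2) ^ (-(1 / 2) : ℝ))
    simp only [zero_add, sub_add_cancel] at hmaj
    have hmeas : Measurable fun x => (√((x - a) * (d - x)))⁻¹ := by fun_prop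
    refine hmaj.mono_fun' hmeas.aestronglyMeasurable ?_
    rw [Filter.EventuallyLE, ae_restrict_iff' measurableSet_uIoc]
    refine Filter.Eventually.of_forall fun x hx => ?_
    rw [uIoc_of_le (by linarith [hm])] at hx
    obtain ⟨hax, hxm⟩ := hx
    have hdx : (d - a) / 2 ≤ d - x := by linarith [hm]
    rw [Real.norm_of_nonneg (by positivity), Real.sqrt_eq_rpow, ← Real.rpow_neg (by nlinarith),
      Real.mul_rpow (by linarith) (by linarith), mul_comm]
    exact mul_le_mul_of_nonneg_right (Real.rpow_le_rpow_of_nonpos (by linarith) hdx (by norm_num))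
      (by positivity)
  -- the integrand is invariant under `x ↦ a + d - x`, which swaps the two halves of `[a, d]`
  have h_right := h_left.comp_sub_left (a + d)
  rw [add_sub_cancel_left, show a + d - m = m by linarith [hm]] at h_right
  refine h_left.trans (h_right.symm.congr fun x _ => ?_)
  ring_nf

lemma intervalIntegrable_div_sqrt_mul_sub_mul {f g : ℝ → ℝ} {a d : ℝ} (had : a ≤ d)
    (hf : ContinuousOn f (Icc a d)) (hg : ContinuousOn g (Icc a d))
    (hg_pos : ∀ x ∈ Icc a d, 0 < g x) :
    IntervalIntegrable (fun x => f x / √((x - a) * (d - x) * g x)) volume a d := by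
  obtain ⟨M, hM⟩ := isCompact_Icc.exists_bound_of_continuousOn hf
  obtain ⟨x₀, hx₀, hmin⟩ := isCompact_Icc.exists_isMinOn (nonempty_Icc.2 had) hg
  have hmaj := (intervalIntegrable_inv_sqrt_mul_sub a d).const_mul (M / √(g x₀))
  rw [intervalIntegrable_iff_integrableOn_Ioo_of_le had] at hmaj ⊢
  refine hmaj.mono' (ContinuousOn.aestronglyMeasurable ?_ measurableSet_Ioo)
    (ae_restrict_of_forall_mem measurableSet_Ioo fun x hx => ?_)
  · refine (hf.mono Ioo_subset_Icc_self).div (((continuous_id.sub continuous_const).mul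
      (continuous_const.sub continuous_id)).continuousOn.mul (hg.mono Ioo_subset_Icc_self)).sqrt
      fun x hx => (Real.sqrt_pos.2 (mul_pos (mul_pos (sub_pos.2 hx.1) (sub_pos.2 hx.2))
        (hg_pos x (Ioo_subset_Icc_self hx)))).ne'
  · have hx' := Ioo_subset_Icc_self hx
    have hP : 0 ≤ (x - a) * (d - x) := mul_nonneg (by linarith [hx.1]) (by linarith [hx.2])
    have hgx := hg_pos x hx'
    calc ‖f x / √((x - a) * (d - x) * g x)‖
        = (√((x - a) * (d - x)))⁻¹ * (‖f x‖ / √(g x)) := by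
          rw [Real.sqrt_mul hP, norm_div, norm_mul, Real.norm_of_nonneg (Real.sqrt_nonneg _),
            Real.norm_of_nonneg (Real.sqrt_nonneg _)]
          ring
      _ ≤ (√((x - a) * (d - x)))⁻¹ * (M / √(g x₀)) := by
          have := hg_pos x₀ hx₀
          gcongr
          · exact (norm_nonneg _).trans (hM x hx')
          · exact hM x hx'
          · exact hmin hx'
      _ = M / √(g x₀) * (√((x - a) * (d - x)))⁻¹ := mul_comm _ _

lemma exists_mem_Ioo_eq_zero_of_integral_div_eq_zero {f w : ℝ → ℝ} {a d : ℝ} (had : a < d)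
    (hf : ContinuousOn f (Ioo a d)) (hw : ∀ x ∈ Ioo a d, 0 < w x)
    (hint : IntervalIntegrable (fun x => f x / w x) volume a d)
    (h0 : ∫ x in a..d, f x / w x = 0) : ∃ z ∈ Ioo a d, f z = 0 := by
  by_contra! hne
  have hsign : (∀ x ∈ Ioo a d, 0 < f x) ∨ ∀ x ∈ Ioo a d, f x < 0 := by
    by_contra! h
    obtain ⟨⟨x, hx, hfx⟩, y, hy, hfy⟩ := h
    obtain ⟨c, hc, hfc⟩ := isPreconnected_Ioo.intermediate_value hx hy hf ⟨hfx, hfy⟩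
    exact hne c hc hfc
  rcases hsign with hpos | hneg
  · have := intervalIntegral.intervalIntegral_pos_of_pos_on hint
      (fun x hx => div_pos (hpos x hx) (hw x hx)) had
    linarith
  · have := intervalIntegral.intervalIntegral_pos_of_pos_on hint.neg
      (fun x hx => neg_pos.2 (div_neg_of_neg_of_pos (hneg x hx) (hw x hx))) had
    rw [Pi.neg_def, intervalIntegral.integral_neg] at this
    linarith

lemma Finset.prod_sub_eq_neg_one_pow_mul_abs {ι R : Type*} [CommRing R] [LinearOrder R]
    [IsStrictOrderedRing R] (s : Finset ι) (c : ι → R) (x : R) :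
    ∏ i ∈ s, (x - c i) = (-1) ^ (s.filter fun i => x < c i).card * |∏ i ∈ s, (x - c i)| := by
  have hfactor : ∀ i, x - c i = (if x < c i then -1 else 1) * |x - c i| := by
    intro i
    split_ifs with h
    · rw [abs_of_neg (sub_neg.2 h), neg_one_mul, neg_neg]
    · rw [abs_of_nonneg (sub_nonneg.2 (not_lt.1 h)), one_mul]
  rw [abs_prod]
  conv_lhs => rw [Finset.prod_congr rfl fun i _ => hfactor i]
  rw [Finset.prod_mul_distrib, Finset.prod_ite, Finset.prod_const, Finset.prod_const_one, mul_one]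

lemma Polynomial.eq_prod_X_sub_C_of_monic_of_natDegree_le {R ι : Type*} [CommRing R] [IsDomain R]
    {p : R[X]} (hp : p.Monic) {s : Finset ι} {z : ι → R} (hz : Set.InjOn z s)
    (hroot : ∀ i ∈ s, p.IsRoot (z i)) (hdeg : p.natDegree ≤ s.card) :
    p = ∏ i ∈ s, (X - C (z i)) := by
  have hsub : s.val.map z ≤ p.roots := by
    refine (Multiset.le_iff_subset (Multiset.Nodup.map_on hz s.nodup)).2 fun r hr => ?_
    obtain ⟨i, hi, rfl⟩ := Multiset.mem_map.1 hr
    exact (mem_roots hp.ne_zero).2 (hroot i hi)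
  have hcard : p.roots.card = p.natDegree :=
    (card_roots' p).antisymm (hdeg.trans (by simpa using Multiset.card_le_card hsub))
  have hroots : s.val.map z = p.roots := Multiset.eq_of_le_of_card_le hsub (by simp [hcard, hdeg])
  rw [← prod_multiset_X_sub_C_of_monic_of_roots_card_eq hp hcard, ← hroots, Multiset.map_map]
  rfl

-- `H` without the two factors vanishing at the ends of the `j`-th gap, signed to be positive there.
def gapCofactor (b : ℕ → ℝ) (ℓ j : ℕ) (x : ℝ) : ℝ :=
  -∏ i ∈ ((Finset.Icc 1 (2 * ℓ)).erase (2 * j)).erase (2 * j + 1), (x - b i)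

lemma continuous_gapCofactor (b : ℕ → ℝ) (ℓ j : ℕ) : Continuous (gapCofactor b ℓ j) := by
  unfold gapCofactor
  fun_prop

section Gaps

variable {ℓ j : ℕ} {b : ℕ → ℝ}

lemma prod_sub_eq_mul_gapCofactor (hj : 1 ≤ j) (hjℓ : j < ℓ) (x : ℝ) :
    ∏ i ∈ Finset.Icc 1 (2 * ℓ), (x - b i)
      = (x - b (2 * j)) * (b (2 * j + 1) - x) * gapCofactor b ℓ j x := by
  rw [gapCofactor, ← Finset.mul_prod_erase _ _ (by simp only [Finset.mem_Icc]; omega : 2 * j ∈ _),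
    ← Finset.mul_prod_erase _ _ (by simp only [Finset.mem_erase, Finset.mem_Icc]; omega :
      2 * j + 1 ∈ (Finset.Icc 1 (2 * ℓ)).erase (2 * j))]
  ring

lemma gapCofactor_pos (hb : StrictMonoOn b (Icc 1 (2 * ℓ))) (hj : 1 ≤ j) (hjℓ : j < ℓ) {x : ℝ}
    (hx : x ∈ Icc (b (2 * j)) (b (2 * j + 1))) : 0 < gapCofactor b ℓ j x := by
  set s := ((Finset.Icc 1 (2 * ℓ)).erase (2 * j)).erase (2 * j + 1)
  have hfilter : (s.filter fun i => x < b i) = Finset.Icc (2 * j + 2) (2 * ℓ) := by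
    ext i
    simp only [s, Finset.mem_filter, Finset.mem_erase, Finset.mem_Icc]
    constructor
    · rintro ⟨⟨hi1, hi2, hi3, hi4⟩, hxi⟩
      refine ⟨?_, hi4⟩
      by_contra! hlt
      have := hb.monotoneOn ⟨hi3, by omega⟩ ⟨by omega, by omega⟩ (by omega : i ≤ 2 * j)
      linarith [hx.1]
    · rintro ⟨hi1, hi2⟩
      refine ⟨⟨by omega, by omega, by omega, hi2⟩, ?_⟩
      have := hb ⟨by omega, by omega⟩ ⟨by omega, hi2⟩ (by omega : 2 * j + 1 < i)
      linarith [hx.2]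
  have hodd : Odd (Finset.Icc (2 * j + 2) (2 * ℓ)).card := by
    rw [Nat.card_Icc, Nat.odd_iff]
    omega
  have hne : ∏ i ∈ s, (x - b i) ≠ 0 := by
    refine Finset.prod_ne_zero_iff.2 fun i hi => sub_ne_zero.2 ?_
    obtain ⟨hi1, hi2, hi3, hi4⟩ : i ≠ 2 * j + 1 ∧ i ≠ 2 * j ∧ 1 ≤ i ∧ i ≤ 2 * ℓ := by
      simpa only [s, Finset.mem_erase, Finset.mem_Icc] using hi
    rcases hi2.lt_or_gt with hlt | hgt
    · exact ((hb ⟨hi3, by omega⟩ ⟨by omega, by omega⟩ hlt).trans_le hx.1).ne'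
    · exact (hx.2.trans_lt (hb ⟨by omega, by omega⟩ ⟨hi3, hi4⟩ (by omega))).ne
  rw [gapCofactor, Finset.prod_sub_eq_neg_one_pow_mul_abs, hfilter, hodd.neg_one_pow]
  simpa using hne

lemma exists_zero_mem_gap (hb : StrictMonoOn b (Icc 1 (2 * ℓ))) (hj : 1 ≤ j) (hjℓ : j < ℓ)
    {f : ℝ → ℝ} (hf : Continuous f)
    (hint : ∫ x in b (2 * j)..b (2 * j + 1), f x / √(∏ i ∈ Finset.Icc 1 (2 * ℓ), (x - b i)) = 0) :
    ∃ z ∈ Ioo (b (2 * j)) (b (2 * j + 1)), f z = 0 := by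
  have hgap : b (2 * j) < b (2 * j + 1) := hb ⟨by omega, by omega⟩ ⟨by omega, by omega⟩ (by omega)
  simp_rw [prod_sub_eq_mul_gapCofactor hj hjℓ] at hint
  refine exists_mem_Ioo_eq_zero_of_integral_div_eq_zero hgap hf.continuousOn
    (fun x hx => Real.sqrt_pos.2 (mul_pos (mul_pos (sub_pos.2 hx.1) (sub_pos.2 hx.2))
      (gapCofactor_pos hb hj hjℓ (Ioo_subset_Icc_self hx))))
    (intervalIntegrable_div_sqrt_mul_sub_mul hgap.le hf.continuousOn
      (continuous_gapCofactor b ℓ j).continuousOn fun x hx => gapCofactor_pos hb hj hjℓ hx) hint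

lemma prod_sub_eq_neg_one_pow_mul_abs_of_mem_Icc (hb : StrictMonoOn b (Icc 1 (2 * ℓ)))
    {z : ℕ → ℝ} (hz : ∀ i, 1 ≤ i → i ≤ ℓ - 1 → z i ∈ Ioo (b (2 * i)) (b (2 * i + 1)))
    (hj : 1 ≤ j) (hjℓ : j ≤ ℓ) {x : ℝ} (hx : x ∈ Icc (b (2 * j - 1)) (b (2 * j))) :
    ∏ i ∈ Finset.Icc 1 (ℓ - 1), (x - z i)
      = (-1) ^ (ℓ - j) * |∏ i ∈ Finset.Icc 1 (ℓ - 1), (x - z i)| := by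
  have hfilter : ((Finset.Icc 1 (ℓ - 1)).filter fun i => x < z i) = Finset.Icc j (ℓ - 1) := by
    ext i
    simp only [Finset.mem_filter, Finset.mem_Icc]
    constructor
    · rintro ⟨⟨hi1, hi2⟩, hxi⟩
      refine ⟨?_, hi2⟩
      by_contra! hlt
      have := hb.monotoneOn ⟨by omega, by omega⟩ ⟨by omega, by omega⟩
        (by omega : 2 * i + 1 ≤ 2 * j - 1)
      linarith [hx.1, (hz i hi1 hi2).2]
    · rintro ⟨hi1, hi2⟩
      refine ⟨⟨by omega, hi2⟩, ?_⟩
      have := hb.monotoneOn ⟨by omega, by omega⟩ ⟨by omega, by omega⟩ (by omega : 2 * j ≤ 2 * i)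
      linarith [hx.2, (hz i (by omega) hi2).1]
  conv_lhs => rw [Finset.prod_sub_eq_neg_one_pow_mul_abs]
  rw [hfilter, Nat.card_Icc, show ℓ - 1 + 1 - j = ℓ - j by omega]

end Gaps

theorem zeros_of_R_general (ℓ : ℕ) (b : ℕ → ℝ)
    (hb : ∀ i, 1 ≤ i → i < 2 * ℓ → b i < b (i + 1))
    (R : Polynomial ℝ) (hmonic : R.Monic) (hdeg : R.natDegree = ℓ - 1)
    (hint : ∀ j, 1 ≤ j → j ≤ ℓ - 1 →
      ∫ x in (b (2 * j))..(b (2 * j + 1)),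
        R.eval x / Real.sqrt (∏ i ∈ Finset.Icc 1 (2 * ℓ), (x - b i)) = 0) :
    ∃ z : ℕ → ℝ,
      (∀ j, 1 ≤ j → j ≤ ℓ - 1 → b (2 * j) < z j ∧ z j < b (2 * j + 1)) ∧
      (∀ j, 1 ≤ j → j + 1 ≤ ℓ - 1 → z j < z (j + 1)) ∧
      R = ∏ j ∈ Finset.Icc 1 (ℓ - 1), (X - C (z j)) ∧
      (∀ j, 1 ≤ j → j ≤ ℓ → ∀ x ∈ Set.Icc (b (2 * j - 1)) (b (2 * j)),
        R.eval x = (-1 : ℝ) ^ (ℓ - j) * |R.eval x|) := by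
  have hb_mono : StrictMonoOn b (Icc 1 (2 * ℓ)) :=
    strictMonoOn_of_lt_add_one ordConnected_Icc fun i _ hi hi' =>
      hb i hi.1 (Nat.lt_of_succ_le hi'.2)
  have hroot : ∀ j, 1 ≤ j → j ≤ ℓ - 1 → ∃ z ∈ Ioo (b (2 * j)) (b (2 * j + 1)), R.eval z = 0 :=
    fun j hj hjℓ => exists_zero_mem_gap hb_mono hj (by omega) R.continuous (hint j hj hjℓ)
  choose! z hz hzR using hroot
  have hz_mono : StrictMonoOn z (Icc 1 (ℓ - 1)) := fun i ⟨hi1, hi2⟩ k ⟨hk1, hk2⟩ hik =>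
    calc z i < b (2 * i + 1) := (hz i hi1 hi2).2
      _ ≤ b (2 * k) := hb_mono.monotoneOn ⟨by omega, by omega⟩ ⟨by omega, by omega⟩ (by omega)
      _ < z k := (hz k hk1 hk2).1
  have hR : R = ∏ j ∈ Finset.Icc 1 (ℓ - 1), (X - C (z j)) :=
    eq_prod_X_sub_C_of_monic_of_natDegree_le hmonic (by simpa using hz_mono.injOn)
      (fun i hi => hzR i (Finset.mem_Icc.1 hi).1 (Finset.mem_Icc.1 hi).2) (by simp [hdeg])
  refine ⟨z, hz, fun j hj hjℓ => hz_mono ⟨hj, by omega⟩ ⟨by omega, hjℓ⟩ (lt_add_one j), hR,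
    fun j hj hjℓ x hx => ?_⟩
  simpa [hR, eval_prod] using prod_sub_eq_neg_one_pow_mul_abs_of_mem_Icc hb_mono hz hj hjℓ hx

/-- The polynomial `R` has `ℓ - 1` simple real zeros, one in each gap of `E`;
consequently `R` has constant sign `(-1)^(ℓ-j)` on the `j`-th interval of `E`. -/
theorem zeros_of_R (ℓ : ℕ) (hℓ : 1 ≤ ℓ) (b : ℕ → ℝ)
    (hb : ∀ i, 1 ≤ i → i < 2 * ℓ → b i < b (i + 1))
    (R : Polynomial ℝ) (hmonic : R.Monic) (hdeg : R.natDegree = ℓ - 1)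
    (hint : ∀ j, 1 ≤ j → j ≤ ℓ - 1 →
      ∫ x in (b (2 * j))..(b (2 * j + 1)),
        R.eval x / Real.sqrt (∏ i ∈ Finset.Icc 1 (2 * ℓ), (x - b i)) = 0) :
    ∃ z : ℕ → ℝ,
      (∀ j, 1 ≤ j → j ≤ ℓ - 1 → b (2 * j) < z j ∧ z j < b (2 * j + 1)) ∧
      (∀ j, 1 ≤ j → j + 1 ≤ ℓ - 1 → z j < z (j + 1)) ∧
      R = ∏ j ∈ Finset.Icc 1 (ℓ - 1), (X - C (z j)) ∧
      (∀ j, 1 ≤ j → j ≤ ℓ → ∀ x ∈ Set.Icc (b (2 * j - 1)) (b (2 * j)),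
        R.eval x = (-1 : ℝ) ^ (ℓ - j) * |R.eval x|) :=
  zeros_of_R_general ℓ b hb R hmonic hdeg hint
end

section
/- Let ℓ ≥ 1, let a₁ < a₂ < … < a_ℓ be real numbers, let m₁, …, m_ℓ > 0 with Σ_{j=1}^ℓ m_j = 1, and let c > 0. Define F₁(w) = Σ_{j=1}^ℓ m_j Log(w − a_j) − log c for w ∈ ℂ ∖ ℝ, where Log is the principal branch of the complex logarithm and log c is the real logarithm. Then: (a) for every w with Im(w) > 0, one has 0 < Im(F₁(w)) < π, and for every w with Im(w) < 0, one has −π < Im(F₁(w)) < 0; (b) F₁ is injective on {w ∈ ℂ : Im(w) ≠ 0}. -/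
open Complex Set
open scoped Real

/-!
`Im F₁(w) = ∑ mⱼ arg (w - aⱼ)` is a convex combination of arguments which all lie in `(0, π)`
when `Im w > 0` and in `(-π, 0)` when `Im w < 0`; this gives the two strips and shows that `F₁`
cannot identify points of opposite half-planes. On the half-plane where `ε Im w > 0`, the function
`ε i F₁` has derivative with real part `ε Im w ∑ mⱼ / |w - aⱼ|² > 0`, because
`Im (w - aⱼ)⁻¹ = -Im w / |w - aⱼ|²`; a function on a convex set whose derivative has positive real
part is injective (Noshiro–Warschawski), as its real part increases along every segment.
-/

theorem Convex.injOn_of_hasDerivAt_of_re_pos {U : Set ℂ} (hU : Convex ℝ U) {f f' : ℂ → ℂ}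
    (hf : ∀ z ∈ U, HasDerivAt f (f' z) z) (hf' : ∀ z ∈ U, 0 < (f' z).re) : InjOn f U := by
  intro z₁ h₁ z₂ h₂ heq
  by_contra hne
  have hd : z₂ - z₁ ≠ 0 := sub_ne_zero.2 (Ne.symm hne)
  have hseg : ∀ t ∈ Icc (0 : ℝ) 1, z₁ + t * (z₂ - z₁) ∈ U := fun t ht => by
    simpa [Complex.real_smul] using hU.add_smul_sub_mem h₁ h₂ ht
  have hderiv : ∀ t ∈ Icc (0 : ℝ) 1,
      HasDerivAt (fun t : ℝ => (f (z₁ + t * (z₂ - z₁)) / (z₂ - z₁)).re)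
        (f' (z₁ + t * (z₂ - z₁))).re t := by
    intro t ht
    have hγ : HasDerivAt (fun s : ℂ => z₁ + s * (z₂ - z₁)) (z₂ - z₁) t := by
      simpa using ((hasDerivAt_id (t : ℂ)).mul_const (z₂ - z₁)).const_add z₁
    have := ((hf _ (hseg t ht)).comp (t : ℂ) hγ).div_const (z₂ - z₁)
    rw [mul_div_cancel_right₀ _ hd] at this
    exact this.real_of_complex
  have hmono : StrictMonoOn (fun t : ℝ => (f (z₁ + t * (z₂ - z₁)) / (z₂ - z₁)).re) (Icc 0 1) :=
    strictMonoOn_of_hasDerivWithinAt_pos (convex_Icc 0 1)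
      (fun t ht => (hderiv t ht).continuousAt.continuousWithinAt)
      (fun t ht => (hderiv t (interior_subset ht)).hasDerivWithinAt)
      (fun t ht => hf' _ (hseg t (interior_subset ht)))
  have := hmono (left_mem_Icc.2 zero_le_one) (right_mem_Icc.2 zero_le_one) zero_lt_one
  simp [heq] at this

theorem Complex.arg_mem_Ioo_of_im_pos {z : ℂ} (hz : 0 < z.im) : arg z ∈ Ioo 0 π :=
  ⟨(arg_nonneg_iff.2 hz.le).lt_of_ne fun h => hz.ne' (arg_eq_zero_iff.1 h.symm).2,
    arg_lt_pi_iff.2 (Or.inr hz.ne')⟩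

theorem Complex.arg_mem_Ioo_of_im_neg {z : ℂ} (hz : z.im < 0) : arg z ∈ Ioo (-π) 0 :=
  ⟨neg_pi_lt_arg z, arg_neg_iff.2 hz⟩

section WeightedLogSum

variable {ι : Type*} {s : Finset ι} {m : ι → ℝ} (a : ι → ℝ)

variable (s m) in
noncomputable def weightedLogSum (w : ℂ) : ℂ :=
  ∑ j ∈ s, (m j : ℂ) * log (w - a j)

variable (s m) in
theorem im_weightedLogSum (w : ℂ) :
    (weightedLogSum s m a w).im = ∑ j ∈ s, m j * arg (w - a j) := by
  simp [weightedLogSum, log_im]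

theorem im_weightedLogSum_mem_Ioo_of_im_pos (hm : ∀ j ∈ s, 0 ≤ m j) (hsum : ∑ j ∈ s, m j = 1)
    {w : ℂ} (hw : 0 < w.im) : (weightedLogSum s m a w).im ∈ Ioo 0 π := by
  rw [im_weightedLogSum]
  exact (convex_Ioo 0 π).sum_mem hm hsum fun j _ => arg_mem_Ioo_of_im_pos (by simpa using hw)

theorem im_weightedLogSum_mem_Ioo_of_im_neg (hm : ∀ j ∈ s, 0 ≤ m j) (hsum : ∑ j ∈ s, m j = 1)
    {w : ℂ} (hw : w.im < 0) : (weightedLogSum s m a w).im ∈ Ioo (-π) 0 := by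
  rw [im_weightedLogSum]
  exact (convex_Ioo (-π) 0).sum_mem hm hsum fun j _ => arg_mem_Ioo_of_im_neg (by simpa using hw)

theorem im_weightedLogSum_pos_iff (hm : ∀ j ∈ s, 0 ≤ m j) (hsum : ∑ j ∈ s, m j = 1) {w : ℂ}
    (hw : w.im ≠ 0) : 0 < (weightedLogSum s m a w).im ↔ 0 < w.im := by
  refine ⟨fun h => hw.lt_or_gt.resolve_left fun hneg => ?_, fun h =>
    (im_weightedLogSum_mem_Ioo_of_im_pos a hm hsum h).1⟩
  exact h.not_gt (im_weightedLogSum_mem_Ioo_of_im_neg a hm hsum hneg).2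

variable (s m) in
theorem hasDerivAt_weightedLogSum {w : ℂ} (hw : w.im ≠ 0) :
    HasDerivAt (weightedLogSum s m a) (∑ j ∈ s, (m j : ℂ) * (w - a j)⁻¹) w := by
  unfold weightedLogSum
  refine HasDerivAt.fun_sum fun j _ => ?_
  have hslit : w - a j ∈ slitPlane := mem_slitPlane_iff.2 (Or.inr (by simpa using hw))
  simpa [div_eq_mul_inv] using
    (((hasDerivAt_id w).sub_const (a j : ℂ)).clog hslit).const_mul (m j : ℂ)

variable (s m) in
theorem im_sum_mul_inv_sub (w : ℂ) :
    (∑ j ∈ s, (m j : ℂ) * (w - a j)⁻¹).im = -(w.im * ∑ j ∈ s, m j / normSq (w - a j)) := by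
  simp only [im_sum, Finset.mul_sum, ← Finset.sum_neg_distrib]
  refine Finset.sum_congr rfl fun j _ => ?_
  simp [inv_im]
  ring

theorem injOn_weightedLogSum_of_mul_im_pos (hs : s.Nonempty) (hm : ∀ j ∈ s, 0 < m j) (ε : ℝ) :
    InjOn (weightedLogSum s m a) {w | 0 < ε * w.im} := by
  have hU : Convex ℝ {w : ℂ | 0 < ε * w.im} :=
    convex_halfSpace_gt (f := fun w : ℂ => ε * w.im) ⟨fun _ _ => by simp [mul_add],
      fun _ _ => by simp only [smul_im, smul_eq_mul]; ring⟩ 0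
  have hderiv : ∀ w ∈ {w : ℂ | 0 < ε * w.im}, HasDerivAt (fun w => ε * I * weightedLogSum s m a w)
      (ε * I * ∑ j ∈ s, (m j : ℂ) * (w - a j)⁻¹) w := fun w hw =>
    (hasDerivAt_weightedLogSum s m a (right_ne_zero_of_mul hw.ne')).const_mul _
  refine InjOn.of_comp (g := fun z => ε * I * z) (hU.injOn_of_hasDerivAt_of_re_pos hderiv ?_)
  intro w hw
  have hw₀ : w.im ≠ 0 := right_ne_zero_of_mul hw.ne'
  have hpos : 0 < ∑ j ∈ s, m j / normSq (w - a j) := Finset.sum_pos (fun j hj =>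
    div_pos (hm j hj) (normSq_pos.2 fun h => hw₀ (by simpa using congrArg im h))) hs
  have hre : (ε * I * ∑ j ∈ s, (m j : ℂ) * (w - a j)⁻¹).re
      = ε * w.im * ∑ j ∈ s, m j / normSq (w - a j) := by
    rw [show ∀ z : ℂ, (ε * I * z).re = -(ε * z.im) from fun z => by simp, im_sum_mul_inv_sub]
    ring
  rw [hre]
  exact mul_pos hw hpos

theorem injOn_weightedLogSum (hs : s.Nonempty) (hm : ∀ j ∈ s, 0 < m j)
    (hsum : ∑ j ∈ s, m j = 1) : InjOn (weightedLogSum s m a) {w | w.im ≠ 0} := by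
  intro w₁ h₁ w₂ h₂ heq
  have hm₀ : ∀ j ∈ s, 0 ≤ m j := fun j hj => (hm j hj).le
  have hsign : (0 < w₁.im ↔ 0 < w₂.im) := by
    rw [← im_weightedLogSum_pos_iff a hm₀ hsum h₁, ← im_weightedLogSum_pos_iff a hm₀ hsum h₂, heq]
  have hsame : 0 < w₁.im * w₂.im := by
    rcases h₁.lt_or_gt with h | h <;> rcases h₂.lt_or_gt with h' | h'
    · exact mul_pos_of_neg_of_neg h h'
    · exact absurd (hsign.2 h') h.not_gt
    · exact absurd (hsign.1 h) h'.not_gt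
    · exact mul_pos h h'
  exact injOn_weightedLogSum_of_mul_im_pos a hs hm w₁.im (mul_self_pos.2 h₁) hsame heq

end WeightedLogSum

theorem complex_green_injective_general (ℓ : ℕ) (hℓ : 1 ≤ ℓ)
    (a : ℕ → ℝ)
    (m : ℕ → ℝ) (hm : ∀ j, 1 ≤ j → j ≤ ℓ → 0 < m j)
    (hsum : ∑ j ∈ Finset.Icc 1 ℓ, m j = 1)
    (c : ℝ)
    (F₁ : ℂ → ℂ)
    (hF₁ : ∀ w, F₁ w = ∑ j ∈ Finset.Icc 1 ℓ, (m j : ℂ) * Complex.log (w - (a j : ℂ))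
      - ((Real.log c : ℝ) : ℂ)) :
    (∀ w : ℂ, 0 < w.im → 0 < (F₁ w).im ∧ (F₁ w).im < Real.pi) ∧
    (∀ w : ℂ, w.im < 0 → -Real.pi < (F₁ w).im ∧ (F₁ w).im < 0) ∧
    Set.InjOn F₁ {w : ℂ | w.im ≠ 0} := by
  have hm' : ∀ j ∈ Finset.Icc 1 ℓ, 0 < m j := fun j hj =>
    hm j (Finset.mem_Icc.1 hj).1 (Finset.mem_Icc.1 hj).2
  have hm₀ : ∀ j ∈ Finset.Icc 1 ℓ, 0 ≤ m j := fun j hj => (hm' j hj).le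
  have hF : F₁ = fun w => weightedLogSum (Finset.Icc 1 ℓ) m a w - (Real.log c : ℂ) := funext hF₁
  have him : ∀ w, (F₁ w).im = (weightedLogSum (Finset.Icc 1 ℓ) m a w).im := by simp [hF]
  refine ⟨fun w hw => ?_, fun w hw => ?_, ?_⟩
  · simpa [him] using im_weightedLogSum_mem_Ioo_of_im_pos a hm₀ hsum hw
  · simpa [him] using im_weightedLogSum_mem_Ioo_of_im_neg a hm₀ hsum hw
  · rw [hF]
    exact sub_left_injective.comp_injOn
      (injOn_weightedLogSum a (Finset.nonempty_Icc.2 hℓ) hm' hsum)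

/-- The complex Green's function `F₁` of the complement of a lemniscatic set with real
centers maps each open half-plane into the corresponding horizontal strip of height `π`,
and is injective off the real axis. -/
theorem complex_green_injective (ℓ : ℕ) (hℓ : 1 ≤ ℓ)
    (a : ℕ → ℝ) (ha : ∀ j, 1 ≤ j → j < ℓ → a j < a (j + 1))
    (m : ℕ → ℝ) (hm : ∀ j, 1 ≤ j → j ≤ ℓ → 0 < m j)
    (hsum : ∑ j ∈ Finset.Icc 1 ℓ, m j = 1)
    (c : ℝ) (hc : 0 < c)
    (F₁ : ℂ → ℂ)
    (hF₁ : ∀ w, F₁ w = ∑ j ∈ Finset.Icc 1 ℓ, (m j : ℂ) * Complex.log (w - (a j : ℂ))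
      - ((Real.log c : ℝ) : ℂ)) :
    (∀ w : ℂ, 0 < w.im → 0 < (F₁ w).im ∧ (F₁ w).im < Real.pi) ∧
    (∀ w : ℂ, w.im < 0 → -Real.pi < (F₁ w).im ∧ (F₁ w).im < 0) ∧
    Set.InjOn F₁ {w : ℂ | w.im ≠ 0} :=
  complex_green_injective_general ℓ hℓ a m hm hsum c F₁ hF₁
end
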